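/- Let c̄ ∈ C, let P : ℝ^m → ℝ^k (k < m) be a linear projection, and suppose the projected feasible set PX, the projected objectives (c,u) ↦ f(c, x) restricted through P, and u ↦ g on PX satisfy the hypotheses of the boundary-vs-interior theorem (compact projected set with nonempty interior, f strictly coordinate-wise monotone in the projected variables for all c, g convex with interior minimizer in the projected space). Then V* < V_DFL for the original problem. -/

import Mathlib

/-!
A minimizer of a function that is strictly monotone in some coordinate cannot be interior:
moving along that coordinate in the right direction decreases the function. Hence every
deterministic decision `P (xD c)` lies on the boundary `P '' X \ interior (P '' X)`, a compact
set on which the continuous `G` attains a minimum; since the unique minimizer of `G` is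
interior, that minimum, a lower bound for every `g (xD c)`, strictly exceeds `G (P xstar)`.
-/

open Filter Topology Set

theorem StrictMono.not_isLocalMin {α β : Type*} [LinearOrder α] [TopologicalSpace α]
    [OrderTopology α] [NoMinOrder α] [DenselyOrdered α] [Preorder β] {φ : α → β}
    (hφ : StrictMono φ) (a : α) : ¬IsLocalMin φ a := fun hmin =>
  ((hmin.filter_mono (nhdsWithin_le_nhds (s := Iio a))).and self_mem_nhdsWithin).exists.elim
    fun _ ⟨hle, hlt⟩ => (hφ hlt).not_ge hle

theorem StrictAnti.not_isLocalMin {α β : Type*} [LinearOrder α] [TopologicalSpace α]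
    [OrderTopology α] [NoMaxOrder α] [DenselyOrdered α] [Preorder β] {φ : α → β}
    (hφ : StrictAnti φ) (a : α) : ¬IsLocalMin φ a := fun hmin =>
  ((hmin.filter_mono (nhdsWithin_le_nhds (s := Ioi a))).and self_mem_nhdsWithin).exists.elim
    fun _ ⟨hle, hlt⟩ => (hφ hlt).not_ge hle

theorem IsMinOn.isLocalMin_update {ι : Type*} [DecidableEq ι] {E : ι → Type*}
    [∀ i, TopologicalSpace (E i)] {β : Type*} [Preorder β] {F : (∀ i, E i) → β}
    {K : Set (∀ i, E i)} {u : ∀ i, E i} (hmin : IsMinOn F K u) (hu : u ∈ interior K) (i : ι) :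
    IsLocalMin (fun t => F (Function.update u i t)) (u i) := by
  have hloc : IsLocalMin F (Function.update u i (u i)) := by
    rw [Function.update_eq_self]
    exact hmin.isLocalMin (mem_interior_iff_mem_nhds.mp hu)
  exact hloc.comp_continuous (continuous_const.update i continuous_id).continuousAt

theorem IsMinOn.notMem_interior_of_strictMono_or_strictAnti_update {ι α β : Type*}
    [DecidableEq ι] [LinearOrder α] [TopologicalSpace α] [OrderTopology α] [NoMinOrder α]
    [NoMaxOrder α] [DenselyOrdered α] [Preorder β] {F : (ι → α) → β} {K : Set (ι → α)}
    {u : ι → α} (hmin : IsMinOn F K u) (i : ι)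
    (hi : StrictMono (fun t => F (Function.update u i t)) ∨
      StrictAnti (fun t => F (Function.update u i t))) :
    u ∉ interior K := fun hu =>
  hi.elim (·.not_isLocalMin _ (hmin.isLocalMin_update hu i))
    (·.not_isLocalMin _ (hmin.isLocalMin_update hu i))

theorem projected_boundary_vs_interior_vstar_lt_vdfl_general
    {m k : ℕ} (hk0 : 0 < k) {C : Type*} [Nonempty C]
    (P : (Fin m → ℝ) →ₗ[ℝ] (Fin k → ℝ))
    (X : Set (Fin m → ℝ))
    (f : C → (Fin m → ℝ) → ℝ) (g : (Fin m → ℝ) → ℝ)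
    (F : C → (Fin k → ℝ) → ℝ) (G : (Fin k → ℝ) → ℝ)
    (hF : ∀ (c : C), ∀ x ∈ X, F c (P x) = f c x)
    (hG : ∀ x ∈ X, G (P x) = g x)
    (hPX : IsCompact (P '' X)) (hGc : Continuous G)
    (hmono : ∀ (c : C) (u : Fin k → ℝ) (i : Fin k),
      StrictMono (fun t : ℝ => F c (Function.update u i t)) ∨
      StrictAnti (fun t : ℝ => F c (Function.update u i t)))
    (xstar : Fin m → ℝ) (hxstarX : xstar ∈ X)
    (hstar_int : P xstar ∈ interior (P '' X))
    (hstar_uniq : ∀ u ∈ P '' X, u ≠ P xstar → G (P xstar) < G u)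
    (xD : C → (Fin m → ℝ)) (hxD : ∀ c : C, xD c ∈ X ∧ ∀ x ∈ X, f c (xD c) ≤ f c x) :
    g xstar < sInf {v : ℝ | ∃ chat : C, v = g (xD chat)} := by
  have hxD_min (c : C) : IsMinOn (F c) (P '' X) (P (xD c)) :=
    isMinOn_iff.mpr <| forall_mem_image.mpr fun x hx => by
      rw [hF c _ hx, hF c _ (hxD c).1]
      exact (hxD c).2 x hx
  have hxD_bdry (c : C) : P (xD c) ∈ P '' X \ interior (P '' X) :=
    ⟨mem_image_of_mem P (hxD c).1,
      (hxD_min c).notMem_interior_of_strictMono_or_strictAnti_update _ (hmono c _ ⟨0, hk0⟩)⟩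
  obtain ⟨u₀, hu₀, hu₀_min⟩ := (hPX.diff isOpen_interior).exists_isMinOn
    ⟨_, hxD_bdry (Classical.arbitrary C)⟩ hGc.continuousOn
  have hgap : G (P xstar) < G u₀ :=
    hstar_uniq u₀ hu₀.1 fun h => hu₀.2 (h ▸ hstar_int)
  rw [← hG xstar hxstarX]
  refine hgap.trans_le (le_csInf ⟨_, Classical.arbitrary C, rfl⟩ ?_)
  rintro _ ⟨c, rfl⟩
  rw [← hG _ (hxD c).1]
  exact hu₀_min (hxD_bdry c)

/-- Projection corollary. Suppose on `X ⊆ ℝ^m` the objectives factor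
through a linear projection `P : ℝ^m → ℝ^k` (`0 < k < m`): `f c x = F c (P x)` and
`g x = G (P x)` on `X`, where the projected set `P '' X` is compact with nonempty
interior, each `F c` is continuous and strictly coordinate-wise monotonic, `G` is convex
and continuous on `P '' X`, and `G` has its unique minimizer `P xstar` in the interior of
`P '' X`. Then the deterministic proxy is strictly suboptimal: V* = g xstar < V_DFL. -/
theorem projected_boundary_vs_interior_vstar_lt_vdfl
    {m k : ℕ} (hk0 : 0 < k) (hkm : k < m) {C : Type*} [Nonempty C]
    (P : (Fin m → ℝ) →ₗ[ℝ] (Fin k → ℝ))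
    (X : Set (Fin m → ℝ))
    (f : C → (Fin m → ℝ) → ℝ) (g : (Fin m → ℝ) → ℝ)
    (F : C → (Fin k → ℝ) → ℝ) (G : (Fin k → ℝ) → ℝ)
    (hF : ∀ (c : C), ∀ x ∈ X, F c (P x) = f c x)
    (hG : ∀ x ∈ X, G (P x) = g x)
    (hPX : IsCompact (P '' X)) (hint : (interior (P '' X)).Nonempty)
    (hFc : ∀ c : C, Continuous (F c)) (hGc : Continuous G)
    (hGconv : ConvexOn ℝ (P '' X) G)
    (hmono : ∀ (c : C) (u : Fin k → ℝ) (i : Fin k),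
      StrictMono (fun t : ℝ => F c (Function.update u i t)) ∨
      StrictAnti (fun t : ℝ => F c (Function.update u i t)))
    (xstar : Fin m → ℝ) (hxstarX : xstar ∈ X)
    (hstar_int : P xstar ∈ interior (P '' X))
    (hstar_min : ∀ u ∈ P '' X, G (P xstar) ≤ G u)
    (hstar_uniq : ∀ u ∈ P '' X, u ≠ P xstar → G (P xstar) < G u)
    (xD : C → (Fin m → ℝ)) (hxD : ∀ c : C, xD c ∈ X ∧ ∀ x ∈ X, f c (xD c) ≤ f c x) :
    g xstar < sInf {v : ℝ | ∃ chat : C, v = g (xD chat)} :=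
  projected_boundary_vs_interior_vstar_lt_vdfl_general hk0 P X f g F G hF hG hPX hGc hmono xstar
    hxstarX hstar_int hstar_uniq xD hxD
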